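/- Let n ≥ 3 and let f = (f_0, …, f_n) be given by f_k = a_0^{n−k} b_0^k + a_1^{n−k} b_1^k, where v_0 = (a_0, b_0) and v_1 = (a_1, b_1) are linearly independent vectors in ℂ². Then f ∈ 𝒜₁ if and only if a_0 a_1 + b_0 b_1 = 0 (i.e., θ(f) = 0) and there exist r ∈ {0,1,2,3} and t ∈ {0,1} such that either (a_1^n = α^{tn+2r}·b_0^n and b_0 ≠ 0) or (b_1^n = α^{tn+2r}·a_0^n and a_0 ≠ 0). -/

import Mathlib

/-- `α = (1 + i)/√2`, a primitive 8th root of unity with `α² = i`. -/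
noncomputable def alpha : ℂ := (1 + Complex.I) / (Real.sqrt 2 : ℂ)

/-- `f ∈ 𝒜₁`: there exist `H ∈ O₂(ℂ)`, a nonzero `c ∈ ℂ`, `t ∈ {0,1}`, and
`r ∈ {0,1,2,3}` such that `f = c ((H(1,1))^{⊗n} + α^{tn+2r} (H(1,-1))^{⊗n})`. -/
def MemA1 (n : ℕ) (f : ℕ → ℂ) : Prop :=
  ∃ (H : Matrix (Fin 2) (Fin 2) ℂ) (c : ℂ) (t r : ℕ),
    H.transpose * H = 1 ∧ c ≠ 0 ∧ t ≤ 1 ∧ r ≤ 3 ∧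
    ∀ k ≤ n, f k =
      c * (H.mulVec ![1, 1] 0 ^ (n - k) * H.mulVec ![1, 1] 1 ^ k +
        alpha ^ (t * n + 2 * r) *
          (H.mulVec ![1, -1] 0 ^ (n - k) * H.mulVec ![1, -1] 1 ^ k))

/-!
Write `u = H(1,1)` for `H ∈ O₂(ℂ)`. Then `u · u = 2` and `H(1,-1) = ±u^⊥`, where
`(x, y)^⊥ = (y, -x)`, so `f ∈ 𝒜₁` iff `f = c (u^{⊗n} + β (u^⊥)^{⊗n})` with `u · u = 2` and `β` in
the group of scalars `α^{tn+2r}`. For `n ≥ 3`, a sum of `n`-th tensor powers of two independent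
vectors determines the two vectors up to order and scaling: contracting with the linear forms
vanishing on three of the four vectors involved kills every term but one. So `v₀, v₁` are multiples
of `u, u^⊥` in some order, i.e. `v₁ = μ v₀^⊥` with `μⁿ` an admissible scalar, and this unwinds to
the stated condition.
-/

open Matrix

namespace Holant

section CommRing

variable {K : Type*} [CommRing K]

/-- The symmetric signature `v^{⊗n}`; its entries with `k > n` are junk. -/
def tensorPow (v : Fin 2 → K) (n k : ℕ) : K := v 0 ^ (n - k) * v 1 ^ k

def wedge (v w : Fin 2 → K) : K := v 0 * w 1 - v 1 * w 0

def perp (v : Fin 2 → K) : Fin 2 → K := ![v 1, -v 0]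

@[simp] lemma wedge_self (v : Fin 2 → K) : wedge v v = 0 := by
  simp only [wedge]; ring

lemma wedge_comm (v w : Fin 2 → K) : wedge w v = -wedge v w := by
  simp only [wedge]; ring

lemma wedge_ne_zero_comm {v w : Fin 2 → K} (h : wedge v w ≠ 0) : wedge w v ≠ 0 := by
  rwa [wedge_comm, neg_ne_zero]

lemma wedge_smul_left (a : K) (v w : Fin 2 → K) : wedge (a • v) w = a * wedge v w := by
  simp only [wedge, Pi.smul_apply, smul_eq_mul]; ring

lemma wedge_smul_right (a : K) (v w : Fin 2 → K) : wedge v (a • w) = a * wedge v w := by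
  simp only [wedge, Pi.smul_apply, smul_eq_mul]; ring

lemma wedge_perp (v w : Fin 2 → K) : wedge v (perp w) = -(v ⬝ᵥ w) := by
  simp only [wedge, perp, vec2_dotProduct, cons_val_zero, cons_val_one, cons_val_fin_one]; ring

lemma ne_zero_of_wedge_ne_zero {v w : Fin 2 → K} (h : wedge v w ≠ 0) : v ≠ 0 := by
  rintro rfl
  simp [wedge] at h

lemma perp_smul (a : K) (v : Fin 2 → K) : perp (a • v) = a • perp v := by
  ext i; fin_cases i <;> simp [perp]

lemma perp_perp (v : Fin 2 → K) : perp (perp v) = -v := by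
  ext i; fin_cases i <;> simp [perp]

lemma smul_perp_dotProduct_smul_perp (d : K) (u : Fin 2 → K) :
    d • perp u ⬝ᵥ d • perp u = d ^ 2 * (u ⬝ᵥ u) := by
  simp only [perp, vec2_dotProduct, Pi.smul_apply, smul_eq_mul, cons_val_zero, cons_val_one,
    cons_val_fin_one]
  ring

lemma tensorPow_smul (a : K) (v : Fin 2 → K) {n k : ℕ} (hk : k ≤ n) :
    tensorPow (a • v) n k = a ^ n * tensorPow v n k := by
  simp only [tensorPow, Pi.smul_apply, smul_eq_mul, mul_pow]
  rw [← Nat.sub_add_cancel hk, pow_add]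
  simp only [Nat.add_sub_cancel]
  ring

/-- Contracting `v^{⊗(m+1)}` with the linear form `(w 1, -w 0)` gives `wedge v w • v^{⊗m}`. -/
lemma wedge_mul_tensorPow (v w : Fin 2 → K) {m k : ℕ} (hk : k ≤ m) :
    wedge v w * tensorPow v m k =
      w 1 * tensorPow v (m + 1) k - w 0 * tensorPow v (m + 1) (k + 1) := by
  simp only [wedge, tensorPow, Nat.succ_sub_succ, Nat.succ_sub hk, pow_succ]
  ring

lemma sum_mul_wedge_mul_tensorPow_eq_zero {ι : Type*} [Fintype ι] (c : ι → K)
    (v : ι → Fin 2 → K) (w : Fin 2 → K) {m : ℕ}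
    (h : ∀ k ≤ m + 1, ∑ i, c i * tensorPow (v i) (m + 1) k = 0) :
    ∀ k ≤ m, ∑ i, c i * wedge (v i) w * tensorPow (v i) m k = 0 := by
  intro k hk
  calc ∑ i, c i * wedge (v i) w * tensorPow (v i) m k
      = w 1 * ∑ i, c i * tensorPow (v i) (m + 1) k
          - w 0 * ∑ i, c i * tensorPow (v i) (m + 1) (k + 1) := by
        simp only [mul_assoc, wedge_mul_tensorPow _ _ hk, Finset.mul_sum, ← Finset.sum_sub_distrib]
        exact Finset.sum_congr rfl fun i _ => by ring
    _ = 0 := by rw [h k (by omega), h (k + 1) (by omega)]; ring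

lemma mulVec_dotProduct_mulVec_of_transpose_mul_self {m : Type*} [Fintype m] [DecidableEq m]
    {H : Matrix m m K} (hH : Hᵀ * H = 1) (x y : m → K) : H *ᵥ x ⬝ᵥ H *ᵥ y = x ⬝ᵥ y := by
  rw [← vecMul_transpose, ← dotProduct_mulVec, mulVec_mulVec, hH, one_mulVec]

end CommRing

section Field

variable {K : Type*} [Field K]

lemma exists_eq_smul_of_wedge_eq_zero {v p : Fin 2 → K} (hp : p ≠ 0) (h : wedge v p = 0) :
    ∃ a : K, v = a • p := by
  have h' : v 0 * p 1 = v 1 * p 0 := sub_eq_zero.mp h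
  by_cases hp0 : p 0 = 0
  · have hp1 : p 1 ≠ 0 := fun hp1 => hp (funext (Fin.forall_fin_two.mpr ⟨hp0, hp1⟩))
    refine ⟨v 1 / p 1, funext (Fin.forall_fin_two.mpr ⟨?_, ?_⟩)⟩ <;>
      simp only [Pi.smul_apply, smul_eq_mul] <;> field_simp
    simpa [hp0] using h'
  · refine ⟨v 0 / p 0, funext (Fin.forall_fin_two.mpr ⟨?_, ?_⟩)⟩ <;>
      simp only [Pi.smul_apply, smul_eq_mul] <;> field_simp
    linear_combination -h'

lemma wedge_eq_zero_of_wedge_eq_zero {v w p : Fin 2 → K} (hp : p ≠ 0) (hv : wedge v p = 0)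
    (hw : wedge w p = 0) : wedge v w = 0 := by
  obtain ⟨a, rfl⟩ := exists_eq_smul_of_wedge_eq_zero hp hv
  obtain ⟨b, rfl⟩ := exists_eq_smul_of_wedge_eq_zero hp hw
  rw [wedge_smul_left, wedge_smul_right, wedge_self, mul_zero, mul_zero]

lemma wedge_ne_zero_of_linearIndependent {a₀ b₀ a₁ b₁ : K}
    (h : LinearIndependent K ![(a₀, b₀), (a₁, b₁)]) : wedge ![a₀, b₀] ![a₁, b₁] ≠ 0 := by
  have hrows : LinearIndependent K !![a₀, b₀; a₁, b₁].row := by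
    have e : !![a₀, b₀; a₁, b₁].row =
        (LinearEquiv.finTwoArrow K K).symm ∘ ![(a₀, b₀), (a₁, b₁)] := by
      ext i j; fin_cases i <;> fin_cases j <;> rfl
    rw [e]
    exact h.map' _ (LinearEquiv.ker _)
  have := (isUnit_iff_isUnit_det _).mp (linearIndependent_rows_iff_isUnit.mp hrows)
  simpa [det_fin_two_of, wedge] using this.ne_zero

lemma eq_zero_of_forall_mul_tensorPow_eq_zero {v : Fin 2 → K} (hv : v ≠ 0) {a : K} {m : ℕ}
    (h : ∀ k ≤ m, a * tensorPow v m k = 0) : a = 0 := by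
  by_cases hv0 : v 0 = 0
  · have hv1 : v 1 ≠ 0 := fun hv1 => hv (funext (Fin.forall_fin_two.mpr ⟨hv0, hv1⟩))
    simpa [tensorPow, hv1] using h m le_rfl
  · simpa [tensorPow, hv0] using h 0 (Nat.zero_le m)

lemma eq_zero_of_forall_add_tensorPow_eq_zero {p q : Fin 2 → K} (hpq : wedge p q ≠ 0) {a b : K}
    {n : ℕ} (hn : 1 ≤ n) (h : ∀ k ≤ n, a * tensorPow p n k + b * tensorPow q n k = 0) :
    a = 0 := by
  obtain ⟨m, rfl⟩ : ∃ m, n = m + 1 := ⟨n - 1, by omega⟩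
  have h₀ : ∀ k ≤ m + 1, ∑ i, ![a, b] i * tensorPow (![p, q] i) (m + 1) k = 0 := by
    simpa [Fin.sum_univ_two] using h
  have h₁ := sum_mul_wedge_mul_tensorPow_eq_zero _ _ q h₀
  simp only [Fin.sum_univ_two, cons_val_zero, cons_val_one, wedge_self, mul_zero,
    zero_mul, add_zero] at h₁
  exact (mul_eq_zero.mp (eq_zero_of_forall_mul_tensorPow_eq_zero
    (ne_zero_of_wedge_ne_zero hpq) h₁)).resolve_right hpq

/-- Contracting with `v₁`, `p` and `q` kills every term but `v₀^{⊗n}`; this needs `n ≥ 3`. -/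
lemma wedge_mul_wedge_eq_zero_of_add_tensorPow_eq {v₀ v₁ p q : Fin 2 → K}
    (hv : wedge v₀ v₁ ≠ 0) {c₀ c₁ : K} {n : ℕ} (hn : 3 ≤ n)
    (h : ∀ k ≤ n,
      tensorPow v₀ n k + tensorPow v₁ n k = c₀ * tensorPow p n k + c₁ * tensorPow q n k) :
    wedge v₀ p * wedge v₀ q = 0 := by
  obtain ⟨m, rfl⟩ : ∃ m, n = m + 1 + 1 + 1 := ⟨n - 3, by omega⟩
  have h₀ : ∀ k ≤ m + 1 + 1 + 1,
      ∑ i, ![1, 1, -c₀, -c₁] i * tensorPow (![v₀, v₁, p, q] i) (m + 1 + 1 + 1) k = 0 := by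
    intro k hk
    simp only [Fin.sum_univ_four, Fin.isValue, cons_val_zero, cons_val_one, cons_val, one_mul,
      neg_mul]
    linear_combination h k hk
  have h₃ := sum_mul_wedge_mul_tensorPow_eq_zero _ _ v₁ <|
    sum_mul_wedge_mul_tensorPow_eq_zero _ _ p <| sum_mul_wedge_mul_tensorPow_eq_zero _ _ q h₀
  simp only [Fin.sum_univ_four, Fin.isValue, cons_val_zero, cons_val_one, cons_val, one_mul,
    wedge_self, mul_zero, zero_mul, add_zero] at h₃
  have := eq_zero_of_forall_mul_tensorPow_eq_zero (ne_zero_of_wedge_ne_zero hv) h₃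
  rw [mul_comm (wedge v₀ p)]
  exact (mul_eq_zero.mp this).resolve_right hv

lemma eq_smul_of_add_tensorPow_eq_of_wedge_eq_zero {v₀ v₁ p q : Fin 2 → K}
    (hv : wedge v₀ v₁ ≠ 0) (hpq : wedge p q ≠ 0) (hv₀ : wedge v₀ p = 0) {c₀ c₁ : K} {n : ℕ}
    (hn : 3 ≤ n)
    (h : ∀ k ≤ n,
      tensorPow v₀ n k + tensorPow v₁ n k = c₀ * tensorPow p n k + c₁ * tensorPow q n k) :
    ∃ a₀ a₁ : K, v₀ = a₀ • p ∧ v₁ = a₁ • q ∧ a₀ ^ n = c₀ ∧ a₁ ^ n = c₁ := by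
  have hp : p ≠ 0 := ne_zero_of_wedge_ne_zero hpq
  have hq : q ≠ 0 := ne_zero_of_wedge_ne_zero (wedge_ne_zero_comm hpq)
  have hv₁p : wedge v₁ p ≠ 0 := fun hv₁ => hv (wedge_eq_zero_of_wedge_eq_zero hp hv₀ hv₁)
  have hv₁q : wedge v₁ q = 0 :=
    (mul_eq_zero.mp (wedge_mul_wedge_eq_zero_of_add_tensorPow_eq (wedge_ne_zero_comm hv) hn
      fun k hk => (add_comm _ _).trans (h k hk))).resolve_left hv₁p
  obtain ⟨a₀, rfl⟩ := exists_eq_smul_of_wedge_eq_zero hp hv₀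
  obtain ⟨a₁, rfl⟩ := exists_eq_smul_of_wedge_eq_zero hq hv₁q
  have h' : ∀ k ≤ n, (a₀ ^ n - c₀) * tensorPow p n k + (a₁ ^ n - c₁) * tensorPow q n k = 0 := by
    intro k hk
    have hk' := h k hk
    rw [tensorPow_smul _ _ hk, tensorPow_smul _ _ hk] at hk'
    linear_combination hk'
  refine ⟨a₀, a₁, rfl, rfl, ?_, ?_⟩
  · exact sub_eq_zero.mp (eq_zero_of_forall_add_tensorPow_eq_zero hpq (by omega) h')
  · exact sub_eq_zero.mp (eq_zero_of_forall_add_tensorPow_eq_zero (wedge_ne_zero_comm hpq)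
      (by omega) fun k hk => (add_comm _ _).trans (h' k hk))

theorem eq_smul_or_eq_smul_of_add_tensorPow_eq {v₀ v₁ p q : Fin 2 → K} (hv : wedge v₀ v₁ ≠ 0)
    (hpq : wedge p q ≠ 0) {c₀ c₁ : K} {n : ℕ} (hn : 3 ≤ n)
    (h : ∀ k ≤ n,
      tensorPow v₀ n k + tensorPow v₁ n k = c₀ * tensorPow p n k + c₁ * tensorPow q n k) :
    (∃ a₀ a₁ : K, v₀ = a₀ • p ∧ v₁ = a₁ • q ∧ a₀ ^ n = c₀ ∧ a₁ ^ n = c₁) ∨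
      (∃ a₀ a₁ : K, v₀ = a₀ • q ∧ v₁ = a₁ • p ∧ a₀ ^ n = c₁ ∧ a₁ ^ n = c₀) := by
  rcases mul_eq_zero.mp (wedge_mul_wedge_eq_zero_of_add_tensorPow_eq hv hn h) with hv₀ | hv₀
  · exact Or.inl (eq_smul_of_add_tensorPow_eq_of_wedge_eq_zero hv hpq hv₀ hn h)
  · exact Or.inr (eq_smul_of_add_tensorPow_eq_of_wedge_eq_zero hv (wedge_ne_zero_comm hpq) hv₀ hn
      fun k hk => (h k hk).trans (add_comm _ _))

lemma exists_eq_smul_perp_of_dotProduct_eq_zero {u w : Fin 2 → K} (hu : u ⬝ᵥ u ≠ 0)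
    (huw : u ⬝ᵥ w = 0) : ∃ d : K, w = d • perp u := by
  rw [vec2_dotProduct] at hu huw
  refine ⟨(u 1 * w 0 - u 0 * w 1) / (u 0 * u 0 + u 1 * u 1),
    funext (Fin.forall_fin_two.mpr ⟨?_, ?_⟩)⟩ <;>
    simp only [perp, Pi.smul_apply, smul_eq_mul, cons_val_zero, cons_val_one] <;>
    rw [div_mul_eq_mul_div, eq_div_iff hu]
  · linear_combination u 0 * huw
  · linear_combination u 1 * huw

lemma exists_eq_smul_perp_iff {v₀ v₁ : Fin 2 → K} (hv₀ : v₀ ≠ 0) {S : Submonoid K}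
    (hS : -1 ∈ S) (n : ℕ) :
    (∃ μ : K, v₁ = μ • perp v₀ ∧ μ ^ n ∈ S) ↔
      v₀ ⬝ᵥ v₁ = 0 ∧ ∃ β ∈ S, (v₁ 0 ^ n = β * v₀ 1 ^ n ∧ v₀ 1 ≠ 0) ∨
        (v₁ 1 ^ n = β * v₀ 0 ^ n ∧ v₀ 0 ≠ 0) := by
  have hneg : ∀ μ ∈ S, (-1) ^ n * μ ∈ S := fun μ hμ => S.mul_mem (S.pow_mem hS n) hμ
  constructor
  · rintro ⟨μ, rfl, hμ⟩
    refine ⟨by simp only [vec2_dotProduct, perp, Pi.smul_apply, smul_eq_mul, cons_val_zero,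
      cons_val_one, cons_val_fin_one]; ring, ?_⟩
    by_cases h₁ : v₀ 1 = 0
    · have h₀ : v₀ 0 ≠ 0 := fun h₀ => hv₀ (funext (Fin.forall_fin_two.mpr ⟨h₀, h₁⟩))
      refine ⟨(-1) ^ n * μ ^ n, hneg _ hμ, Or.inr ⟨?_, h₀⟩⟩
      simp only [perp, Pi.smul_apply, smul_eq_mul, cons_val_one, cons_val_zero]
      rw [mul_neg, neg_pow, mul_pow]
      ring
    · exact ⟨μ ^ n, hμ, Or.inl ⟨by simp [perp, mul_pow], h₁⟩⟩
  · rintro ⟨horth, β, hβ, ⟨hβ₁, h₁⟩ | ⟨hβ₀, h₀⟩⟩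
    all_goals rw [vec2_dotProduct] at horth
    · refine ⟨v₁ 0 / v₀ 1, funext (Fin.forall_fin_two.mpr ⟨?_, ?_⟩), ?_⟩
      · simp [perp, h₁]
      · simp only [perp, Pi.smul_apply, smul_eq_mul, cons_val_one, cons_val_zero]
        field_simp
        linear_combination horth
      · rwa [div_pow, hβ₁, mul_div_cancel_right₀ _ (pow_ne_zero n h₁)]
    · refine ⟨-v₁ 1 / v₀ 0, funext (Fin.forall_fin_two.mpr ⟨?_, ?_⟩), ?_⟩
      · simp only [perp, Pi.smul_apply, smul_eq_mul, cons_val_zero]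
        field_simp
        linear_combination horth
      · simp [perp, h₀]
      · rw [neg_div, neg_pow, div_pow, hβ₀, mul_div_cancel_right₀ _ (pow_ne_zero n h₀)]
        exact hneg β hβ

def orthoMatrix (u : Fin 2 → K) : Matrix (Fin 2) (Fin 2) K :=
  !![(u 0 + u 1) / 2, (u 0 - u 1) / 2; (u 1 - u 0) / 2, (u 1 + u 0) / 2]

variable [NeZero (2 : K)]

lemma orthoMatrix_transpose_mul_self {u : Fin 2 → K} (hu : u ⬝ᵥ u = 2) :
    (orthoMatrix u)ᵀ * orthoMatrix u = 1 := by
  rw [vec2_dotProduct] at hu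
  ext i j
  fin_cases i <;> fin_cases j <;>
    simp only [orthoMatrix, mul_apply, transpose_apply, of_apply, Fin.sum_univ_two, cons_val',
      cons_val_zero, cons_val_one, cons_val_fin_one, Fin.zero_eta, Fin.mk_one, Fin.isValue,
      one_apply_eq, one_apply_ne, ne_eq, zero_ne_one, one_ne_zero, not_false_eq_true] <;>
    field_simp <;> first | ring1 | linear_combination 2 * hu

lemma orthoMatrix_mulVec_one_one (u : Fin 2 → K) : orthoMatrix u *ᵥ ![1, 1] = u := by
  refine funext (Fin.forall_fin_two.mpr ⟨?_, ?_⟩) <;>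
    simp only [orthoMatrix, mulVec, vec2_dotProduct, of_apply, cons_val_zero, cons_val_one,
      cons_val_fin_one] <;>
    field_simp <;> ring

lemma orthoMatrix_mulVec_one_neg_one (u : Fin 2 → K) : orthoMatrix u *ᵥ ![1, -1] = perp u := by
  refine funext (Fin.forall_fin_two.mpr ⟨?_, ?_⟩) <;>
    simp only [orthoMatrix, perp, mulVec, vec2_dotProduct, of_apply, cons_val_zero, cons_val_one,
      cons_val_fin_one] <;>
    field_simp <;> ring

end Field

lemma alpha_sq : alpha ^ 2 = Complex.I := by
  have h2 : ((Real.sqrt 2 : ℝ) : ℂ) ^ 2 = 2 := by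
    rw [← Complex.ofReal_pow, Real.sq_sqrt zero_le_two]; norm_num
  rw [alpha, div_pow, h2, add_sq, Complex.I_sq]
  ring

lemma alpha_pow_eight : alpha ^ 8 = 1 := by
  rw [show 8 = 2 * 4 from rfl, pow_mul, alpha_sq, Complex.I_pow_four]

lemma alpha_pow_two_mul_mod (m : ℕ) : alpha ^ (2 * m) = alpha ^ (2 * (m % 4)) := by
  conv_lhs => rw [← Nat.mod_add_div m 4]
  rw [mul_add, pow_add, ← mul_assoc, pow_mul alpha (2 * 4), alpha_pow_eight, one_pow, mul_one]

/-- The scalars `α^{tn+2r}` of `𝒜₁`; the exponents need not be bounded, as `α⁸ = 1`. -/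
def alphaPows (n : ℕ) : Submonoid ℂ where
  carrier := {x | ∃ t r : ℕ, x = alpha ^ (t * n + 2 * r)}
  mul_mem' := by
    rintro _ _ ⟨t, r, rfl⟩ ⟨t', r', rfl⟩
    exact ⟨t + t', r + r', by rw [← pow_add]; ring_nf⟩
  one_mem' := ⟨0, 0, by simp⟩

lemma mem_alphaPows_iff {n : ℕ} {x : ℂ} :
    x ∈ alphaPows n ↔ ∃ r t : ℕ, r ≤ 3 ∧ t ≤ 1 ∧ x = alpha ^ (t * n + 2 * r) := by
  constructor
  · rintro ⟨t, r, rfl⟩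
    refine ⟨(t / 2 * n + r) % 4, t % 2, by omega, by omega, ?_⟩
    have ht : t * n + 2 * r = t % 2 * n + 2 * (t / 2 * n + r) := by
      nth_rewrite 1 [← Nat.mod_add_div t 2]; ring
    rw [ht, pow_add, pow_add, alpha_pow_two_mul_mod]
  · rintro ⟨r, t, -, -, rfl⟩
    exact ⟨t, r, rfl⟩

lemma exists_mem_alphaPows_iff {n : ℕ} {P : ℂ → Prop} :
    (∃ β ∈ alphaPows n, P β) ↔ ∃ r t : ℕ, r ≤ 3 ∧ t ≤ 1 ∧ P (alpha ^ (t * n + 2 * r)) := by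
  simp only [mem_alphaPows_iff]
  constructor
  · rintro ⟨_, ⟨r, t, hr, ht, rfl⟩, hP⟩
    exact ⟨r, t, hr, ht, hP⟩
  · rintro ⟨r, t, hr, ht, hP⟩
    exact ⟨_, ⟨r, t, hr, ht, rfl⟩, hP⟩

lemma neg_one_mem_alphaPows (n : ℕ) : -1 ∈ alphaPows n :=
  ⟨0, 2, by rw [show 0 * n + 2 * 2 = 2 * 2 by ring, pow_mul, alpha_sq, Complex.I_sq]⟩

lemma inv_mem_alphaPows {n : ℕ} {x : ℂ} (hx : x ∈ alphaPows n) : x⁻¹ ∈ alphaPows n := by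
  obtain ⟨t, r, rfl⟩ := hx
  refine ⟨7 * t, 7 * r, inv_eq_of_mul_eq_one_right ?_⟩
  rw [← pow_add, show t * n + 2 * r + (7 * t * n + 2 * (7 * r)) = 8 * (t * n + 2 * r) by ring,
    pow_mul, alpha_pow_eight, one_pow]

def IsPerpSum (n : ℕ) (f : ℕ → ℂ) : Prop :=
  ∃ u : Fin 2 → ℂ, u ⬝ᵥ u = 2 ∧ ∃ c ≠ 0, ∃ β ∈ alphaPows n,
    ∀ k ≤ n, f k = c * (tensorPow u n k + β * tensorPow (perp u) n k)

lemma memA1_iff_isPerpSum {n : ℕ} {f : ℕ → ℂ} : MemA1 n f ↔ IsPerpSum n f := by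
  constructor
  · rintro ⟨H, c, t, r, hH, hc, ht, hr, hf⟩
    have hdot := mulVec_dotProduct_mulVec_of_transpose_mul_self hH
    have huu : H *ᵥ ![1, 1] ⬝ᵥ H *ᵥ ![1, 1] = 2 := by
      rw [hdot, vec2_dotProduct]; norm_num
    obtain ⟨d, hd⟩ := exists_eq_smul_perp_of_dotProduct_eq_zero (by rw [huu]; norm_num)
      (show H *ᵥ ![1, 1] ⬝ᵥ H *ᵥ ![1, -1] = 0 by rw [hdot, vec2_dotProduct]; norm_num)
    have hd1 : d = 1 ∨ d = -1 := by
      have hww := hdot ![1, -1] ![1, -1]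
      rw [hd, smul_perp_dotProduct_smul_perp, huu, vec2_dotProduct] at hww
      norm_num at hww
      exact hww
    have hdS : d ∈ alphaPows n := by
      rcases hd1 with rfl | rfl
      · exact Submonoid.one_mem _
      · exact neg_one_mem_alphaPows n
    refine ⟨H *ᵥ ![1, 1], huu, c, hc, alpha ^ (t * n + 2 * r) * d ^ n,
      Submonoid.mul_mem _ (mem_alphaPows_iff.mpr ⟨r, t, hr, ht, rfl⟩) (Submonoid.pow_mem _ hdS n),
      fun k hk => ?_⟩
    rw [hf k hk, mul_assoc _ (d ^ n), ← tensorPow_smul _ _ hk, ← hd]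
    rfl
  · rintro ⟨u, hu, c, hc, β, hβ, hf⟩
    obtain ⟨r, t, hr, ht, rfl⟩ := mem_alphaPows_iff.mp hβ
    refine ⟨orthoMatrix u, c, t, r, orthoMatrix_transpose_mul_self hu, hc, ht, hr, fun k hk => ?_⟩
    rw [orthoMatrix_mulVec_one_one, orthoMatrix_mulVec_one_neg_one, hf k hk]
    rfl

theorem isPerpSum_iff_exists_eq_smul_perp {n : ℕ} (hn : 3 ≤ n) {v₀ v₁ : Fin 2 → ℂ}
    (hv : wedge v₀ v₁ ≠ 0) {f : ℕ → ℂ}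
    (hf : ∀ k ≤ n, f k = tensorPow v₀ n k + tensorPow v₁ n k) :
    IsPerpSum n f ↔ ∃ μ : ℂ, v₁ = μ • perp v₀ ∧ μ ^ n ∈ alphaPows n := by
  have hv₀ := ne_zero_of_wedge_ne_zero hv
  constructor
  · rintro ⟨u, hu, c, hc, β, hβ, hfu⟩
    have hu' : wedge u (perp u) ≠ 0 := by rw [wedge_perp, hu]; norm_num
    have h : ∀ k ≤ n, tensorPow v₀ n k + tensorPow v₁ n k =
        c * tensorPow u n k + c * β * tensorPow (perp u) n k := fun k hk => by
      rw [← hf k hk, hfu k hk]; ring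
    rcases eq_smul_or_eq_smul_of_add_tensorPow_eq hv hu' hn h with
      ⟨a₀, a₁, rfl, rfl, ha₀, ha₁⟩ | ⟨a₀, a₁, rfl, rfl, ha₀, ha₁⟩
    · have ha : a₀ ≠ 0 := by rintro rfl; simp at hv₀
      refine ⟨a₁ / a₀, ?_, ?_⟩
      · rw [perp_smul, smul_smul, div_mul_cancel₀ _ ha]
      · rwa [div_pow, ha₀, ha₁, mul_div_cancel_left₀ _ hc]
    · have ha : a₀ ≠ 0 := by rintro rfl; simp at hv₀
      refine ⟨-a₁ / a₀, ?_, ?_⟩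
      · rw [perp_smul, perp_perp, smul_neg, smul_neg, smul_smul, div_mul_cancel₀ _ ha, neg_smul,
          neg_neg]
      · rw [neg_div, neg_pow, div_pow, ha₀, ha₁, div_mul_cancel_left₀ hc]
        exact Submonoid.mul_mem _ (Submonoid.pow_mem _ (neg_one_mem_alphaPows n) n)
          (inv_mem_alphaPows hβ)
  · rintro ⟨μ, rfl, hμ⟩
    have hvv : v₀ ⬝ᵥ v₀ ≠ 0 := by
      rw [wedge_smul_right, wedge_perp, mul_ne_zero_iff, neg_ne_zero] at hv
      exact hv.2
    obtain ⟨s, hs⟩ := IsAlgClosed.exists_eq_mul_self (2 / (v₀ ⬝ᵥ v₀))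
    have hs₀ : s ≠ 0 := by
      rintro rfl
      rw [mul_zero, div_eq_zero_iff] at hs
      exact hs.elim two_ne_zero hvv
    refine ⟨s • v₀, ?_, (s ^ n)⁻¹, inv_ne_zero (pow_ne_zero n hs₀), μ ^ n, hμ, fun k hk => ?_⟩
    · rw [smul_dotProduct, dotProduct_smul, smul_eq_mul, smul_eq_mul, ← mul_assoc, ← hs,
        div_mul_cancel₀ _ hvv]
    · rw [hf k hk, perp_smul, tensorPow_smul _ _ hk, tensorPow_smul _ _ hk, tensorPow_smul _ _ hk]
      field_simp

end Holant

open Holant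

/-- **Characterization of `𝒜₁`.**
Let `f = v₀^{⊗n} + v₁^{⊗n}` with `v₀ = (a₀, b₀)`, `v₁ = (a₁, b₁)` linearly independent and
`n ≥ 3`. Then `f ∈ 𝒜₁` iff `a₀ a₁ + b₀ b₁ = 0` (i.e. `θ(f) = 0`) and there exist
`r ∈ {0,1,2,3}` and `t ∈ {0,1}` such that `a₁ⁿ = α^{tn+2r} b₀ⁿ ≠ 0` or
`b₁ⁿ = α^{tn+2r} a₀ⁿ ≠ 0`. -/
theorem stmt_14 (n : ℕ) (hn : 3 ≤ n) (a₀ b₀ a₁ b₁ : ℂ)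
    (hli : LinearIndependent ℂ ![(a₀, b₀), (a₁, b₁)]) (f : ℕ → ℂ)
    (hf : ∀ k ≤ n, f k = a₀ ^ (n - k) * b₀ ^ k + a₁ ^ (n - k) * b₁ ^ k) :
    MemA1 n f ↔
      a₀ * a₁ + b₀ * b₁ = 0 ∧
      ∃ r t : ℕ, r ≤ 3 ∧ t ≤ 1 ∧
        ((a₁ ^ n = alpha ^ (t * n + 2 * r) * b₀ ^ n ∧ b₀ ≠ 0) ∨
          (b₁ ^ n = alpha ^ (t * n + 2 * r) * a₀ ^ n ∧ a₀ ≠ 0)) := by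
  have hv := wedge_ne_zero_of_linearIndependent hli
  rw [memA1_iff_isPerpSum, isPerpSum_iff_exists_eq_smul_perp hn hv hf,
    exists_eq_smul_perp_iff (ne_zero_of_wedge_ne_zero hv) (neg_one_mem_alphaPows n),
    exists_mem_alphaPows_iff]
  simp only [vec2_dotProduct, cons_val_zero, cons_val_one]
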